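/- Let p ≥ 1 and n ≥ 2^{3p+2}·p² + p + 1. The maximum size of a family 𝓕 ⊆ 2^[n] such that |A∩B| + |B∩C| + |C∩A| ≥ 3n − (6p+4) for all A, B, C ∈ 𝓕 equals Σ_{i=0}^{p} C(n,i) + C(n−1, p). -/

import Mathlib

/-!
Passing to complements `G = [n] \ F`, the condition becomes
`|G ∪ H| + |H ∪ K| + |K ∪ G| ≤ 6p + 4`. The complements of size at most `p` number at most
`∑_{i ≤ p} C(n, i)`. The larger ones either form an intersecting `(p+1)`-uniform family, bounded
by `C(n-1, p)` through Erdős–Ko–Rado, or they admit a core `S = G ∪ H` of at most `3p + 1`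
points outside which each of them has fewer than `p` points: take `G` of size at least `p + 2`
and `H` maximizing `|H \ G|`, or else two disjoint members. A core allows at most
`2^{3p+1} ∑_{k<p} C(n, k)` sets, which is at most `C(n-1, p)` once `n` is large. Equality holds
for the complements of the sets of size at most `p` and the `(p+1)`-sets through a fixed point.
-/

/-- `d A B C = |A∩B| + |B∩C| + |C∩A|`. -/
def dd (A B C : Finset ℕ) : ℕ := (A ∩ B).card + (B ∩ C).card + (C ∩ A).card

open Finset

theorem Nat.choose_le_choose_of_le_half_left {n k m : ℕ} (hkm : k ≤ m) (hm : m ≤ n / 2) :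
    n.choose k ≤ n.choose m := by
  induction m, hkm using Nat.le_induction with
  | base => exact le_rfl
  | succ m _ ih => exact (ih (by omega)).trans (Nat.choose_le_succ_of_lt_half_left (by omega))

theorem four_mul_le_of_two_pow_mul_sq_le {n p : ℕ} (hn : 2 ^ (3 * p + 2) * p ^ 2 + p + 1 ≤ n) :
    4 * p ≤ n := by
  calc 4 * p = 2 ^ 2 * p := by norm_num
    _ ≤ 2 ^ (3 * p + 2) * p ^ 2 :=
        Nat.mul_le_mul (Nat.pow_le_pow_right two_pos (by omega)) (Nat.le_self_pow two_ne_zero p)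
    _ ≤ n := by omega

theorem two_pow_mul_sum_choose_le {n p : ℕ} (hp : 1 ≤ p)
    (hn : 2 ^ (3 * p + 2) * p ^ 2 + p + 1 ≤ n) :
    2 ^ (3 * p + 1) * ∑ k ∈ range p, n.choose k ≤ (n - 1).choose p := by
  have hpn := four_mul_le_of_two_pow_mul_sq_le hn
  have hsum : ∑ k ∈ range p, n.choose k ≤ p * n.choose (p - 1) := by
    simpa using sum_le_card_nsmul (range p) _ _ fun k hk =>
      Nat.choose_le_choose_of_le_half_left (by have := mem_range.1 hk; omega) (by omega)
  have hhalf : n.choose (p - 1) ≤ 2 * (n - 1).choose (p - 1) := by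
    have h := Nat.choose_mul_succ_eq (n - 1) (p - 1)
    rw [Nat.sub_add_cancel (by omega)] at h
    refine Nat.le_of_mul_le_mul_right ?_ (show 0 < n - (p - 1) by omega)
    calc n.choose (p - 1) * (n - (p - 1)) = (n - 1).choose (p - 1) * n := h.symm
      _ ≤ (n - 1).choose (p - 1) * (2 * (n - (p - 1))) := by gcongr; omega
      _ = 2 * (n - 1).choose (p - 1) * (n - (p - 1)) := by ring
  have hstep : (n - 1).choose p * p = (n - 1).choose (p - 1) * (n - p) := by
    have h := Nat.choose_succ_right_eq (n - 1) (p - 1)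
    rwa [Nat.sub_add_cancel hp, show n - 1 - (p - 1) = n - p by omega] at h
  refine Nat.le_of_mul_le_mul_right ?_ (show 0 < p by omega)
  calc 2 ^ (3 * p + 1) * (∑ k ∈ range p, n.choose k) * p
      ≤ 2 ^ (3 * p + 1) * (p * (2 * (n - 1).choose (p - 1))) * p := by
        gcongr; exact hsum.trans (by gcongr)
    _ = (n - 1).choose (p - 1) * (2 ^ (3 * p + 2) * p ^ 2) := by ring
    _ ≤ (n - 1).choose (p - 1) * (n - p) := by gcongr; omega
    _ = (n - 1).choose p * p := hstep.symm

variable {α : Type*}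

theorem card_filter_powerset_card_lt (U : Finset α) (m : ℕ) :
    #{K ∈ U.powerset | #K < m} = ∑ i ∈ range m, (#U).choose i := by
  rw [card_eq_sum_card_fiberwise (f := card) (t := range m) fun K hK => by
    simpa using (mem_filter.1 hK).2]
  refine sum_congr rfl fun i hi => ?_
  rw [← card_powersetCard, powersetCard_eq_filter, filter_filter]
  congr 1
  exact filter_congr fun K _ => by have := mem_range.1 hi; omega

theorem card_le_sum_choose_of_card_lt {U : Finset α} {𝒮 : Finset (Finset α)} {m : ℕ}
    (hU : ∀ K ∈ 𝒮, K ⊆ U) (hm : ∀ K ∈ 𝒮, #K < m) :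
    #𝒮 ≤ ∑ i ∈ range m, (#U).choose i := by
  rw [← card_filter_powerset_card_lt]
  exact card_le_card fun K hK => mem_filter.2 ⟨mem_powerset.2 (hU K hK), hm K hK⟩

variable [DecidableEq α]

theorem card_le_two_pow_mul_sum_choose {U S : Finset α} {ℒ : Finset (Finset α)} {m : ℕ}
    (hU : ∀ K ∈ ℒ, K ⊆ U) (hS : ∀ K ∈ ℒ, #(K \ S) < m) :
    #ℒ ≤ 2 ^ #S * ∑ i ∈ range m, (#U).choose i := by
  calc #ℒ ≤ #(S.powerset ×ˢ {T ∈ U.powerset | #T < m}) := by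
        refine card_le_card_of_injOn (fun K => (K ∩ S, K \ S)) (fun K hK => ?_)
          fun K _ K' _ h => ?_
        · simp only [mem_coe, mem_product, mem_powerset, mem_filter]
          exact ⟨inter_subset_right, sdiff_subset.trans (hU K hK), hS K hK⟩
        · simp only [Prod.ext_iff] at h
          rw [← sdiff_union_inter K S, ← sdiff_union_inter K' S, h.1, h.2]
    _ = 2 ^ #S * ∑ i ∈ range m, (#U).choose i := by
        rw [card_product, card_powerset, card_filter_powerset_card_lt]

theorem card_le_choose_of_intersecting {U : Finset α} {ℒ : Finset (Finset α)} {r : ℕ}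
    (hU : ∀ K ∈ ℒ, K ⊆ U) (hℒ : (ℒ : Set (Finset α)).Intersecting)
    (hr : (ℒ : Set (Finset α)).Sized r) (hrU : r ≤ #U / 2) :
    #ℒ ≤ (#U - 1).choose (r - 1) := by
  set φ : Finset α → Finset (Fin #U) := fun K =>
    (K.subtype (· ∈ U)).map U.equivFin.toEmbedding
  have hφ : ∀ K ∈ ℒ, (K.subtype (· ∈ U)).map (Function.Embedding.subtype _) = K :=
    fun K hK => subtype_map_of_mem (hU K hK)
  have hinj : Set.InjOn φ ℒ := fun A hA B hB h => by
    rw [← hφ A hA, ← hφ B hB, map_injective _ h]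
  have hdisj : ∀ A ∈ ℒ, ∀ B ∈ ℒ, Disjoint (φ A) (φ B) → Disjoint A B := fun A hA B hB h => by
    rwa [← hφ A hA, ← hφ B hB, disjoint_map (Function.Embedding.subtype _),
      ← disjoint_map U.equivFin.toEmbedding]
  have hcard : ∀ K ∈ ℒ, #(φ K) = #K := fun K hK => by
    rw [card_map, card_subtype, filter_true_of_mem (hU K hK)]
  have := erdos_ko_rado (𝒜 := ℒ.image φ) ?_ ?_ hrU
  · rwa [card_image_of_injOn hinj] at this
  · simp only [coe_image]
    rintro _ ⟨A, hA, rfl⟩ _ ⟨B, hB, rfl⟩ h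
    exact hℒ hA hB (hdisj A hA B hB h)
  · simp only [coe_image]
    rintro _ ⟨K, hK, rfl⟩
    rw [hcard K hK, hr hK]

theorem card_image_sdiff {U : Finset α} {𝒢 : Finset (Finset α)} (hU : ∀ K ∈ 𝒢, K ⊆ U) :
    #(𝒢.image (U \ ·)) = #𝒢 :=
  card_image_of_injOn fun A hA B hB h => (sdiff_right_inj (hU A hA) (hU B hB)).1 h

def unionSum (A B C : Finset α) : ℕ := #(A ∪ B) + #(B ∪ C) + #(C ∪ A)

section LargeSets

variable {p : ℕ} {G H K : Finset α}

theorem card_union_le_of_unionSum_le (hH : p < #H) (h : unionSum G H H ≤ 6 * p + 4) :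
    #(G ∪ H) ≤ 3 * p + 1 := by
  simp only [unionSum, union_self, union_comm H G] at h
  omega

theorem card_sdiff_union_lt_of_card_sdiff_le (hG : p + 1 < #G) (hK : p < #K)
    (hKH : #(K \ G) ≤ #(H \ G)) (h : unionSum G K H ≤ 6 * p + 4) : #(K \ (G ∪ H)) < p := by
  by_cases hsmall : #(H \ G) < p
  · exact (card_le_card (sdiff_subset_sdiff subset_rfl subset_union_left)).trans_lt
      (hKH.trans_lt hsmall)
  have hKG := card_sdiff_add_card K G
  have hHG := card_sdiff_add_card H G
  have hKsplit := card_inter_add_card_sdiff K G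
  have hKunionH : #(K ∩ G) + (#(K \ (G ∪ H)) + #(H \ G)) ≤ #(K ∪ H) := by
    rw [← card_union_of_disjoint, ← card_union_of_disjoint]
    · exact card_le_card (by intro x; simp only [mem_union, mem_inter, mem_sdiff]; tauto)
    · simp only [disjoint_left, mem_inter, mem_union, mem_sdiff]; tauto
    · simp only [disjoint_left, mem_union, mem_sdiff]; tauto
  simp only [unionSum, union_comm G K, union_comm H G] at h hKG hHG
  omega

theorem card_sdiff_union_lt_of_disjoint (hGH : Disjoint G H) (hG : p < #G)
    (hH : p < #H) (hK : p < #K) (h : unionSum G H K ≤ 6 * p + 4) :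
    #(K \ (G ∪ H)) < p := by
  have hHK := card_union_add_card_inter H K
  have hKG := card_union_add_card_inter K G
  have hKsplit : #(K ∩ G) + #(K ∩ H) + #(K \ (G ∪ H)) = #K := by
    rw [← card_inter_add_card_sdiff K (G ∪ H), inter_union_distrib_left,
      card_union_of_disjoint (hGH.mono inter_subset_right inter_subset_right)]
  simp only [unionSum, card_union_of_disjoint hGH, inter_comm H K] at h hHK
  omega

variable {ℒ : Finset (Finset α)}

theorem exists_core_or_intersecting (hbig : ∀ K ∈ ℒ, p < #K)
    (hℒ : ∀ G ∈ ℒ, ∀ H ∈ ℒ, ∀ K ∈ ℒ, unionSum G H K ≤ 6 * p + 4) :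
    (∃ S : Finset α, #S ≤ 3 * p + 1 ∧ ∀ K ∈ ℒ, #(K \ S) < p) ∨
      ((ℒ : Set (Finset α)).Intersecting ∧ (ℒ : Set (Finset α)).Sized (p + 1)) := by
  by_cases hlarge : ∃ G ∈ ℒ, p + 1 < #G
  · obtain ⟨G, hG, hGp⟩ := hlarge
    obtain ⟨H, hH, hmax⟩ := exists_max_image ℒ (fun K => #(K \ G)) ⟨G, hG⟩
    exact Or.inl ⟨G ∪ H, card_union_le_of_unionSum_le (hbig H hH) (hℒ G hG H hH H hH),
      fun K hK => card_sdiff_union_lt_of_card_sdiff_le hGp (hbig K hK) (hmax K hK)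
        (hℒ G hG K hK H hH)⟩
  push Not at hlarge
  by_cases hint : (ℒ : Set (Finset α)).Intersecting
  · exact Or.inr ⟨hint, fun K hK => by have := hbig K hK; have := hlarge K hK; omega⟩
  obtain ⟨G, hG, H, hH, hGH⟩ : ∃ G ∈ ℒ, ∃ H ∈ ℒ, Disjoint G H := by
    simpa [Set.Intersecting] using hint
  exact Or.inl ⟨G ∪ H, card_union_le_of_unionSum_le (hbig H hH) (hℒ G hG H hH H hH),
    fun K hK => card_sdiff_union_lt_of_disjoint hGH (hbig G hG) (hbig H hH) (hbig K hK)
      (hℒ G hG H hH K hK)⟩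

end LargeSets

theorem card_le_choose_of_forall_lt_card {U : Finset α} {ℒ : Finset (Finset α)} {p : ℕ}
    (hp : 1 ≤ p) (hn : 2 ^ (3 * p + 2) * p ^ 2 + p < #U) (hU : ∀ K ∈ ℒ, K ⊆ U)
    (hbig : ∀ K ∈ ℒ, p < #K) (hℒ : ∀ G ∈ ℒ, ∀ H ∈ ℒ, ∀ K ∈ ℒ, unionSum G H K ≤ 6 * p + 4) :
    #ℒ ≤ (#U - 1).choose p := by
  obtain ⟨S, hS, hcore⟩ | ⟨hint, hsized⟩ := exists_core_or_intersecting hbig hℒ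
  · calc #ℒ ≤ 2 ^ #S * ∑ i ∈ range p, (#U).choose i := card_le_two_pow_mul_sum_choose hU hcore
      _ ≤ 2 ^ (3 * p + 1) * ∑ i ∈ range p, (#U).choose i := by gcongr; norm_num
      _ ≤ (#U - 1).choose p := two_pow_mul_sum_choose_le hp hn
  · have := four_mul_le_of_two_pow_mul_sq_le hn
    simpa using card_le_choose_of_intersecting hU hint hsized (by omega)

theorem card_le_of_unionSum_le {U : Finset α} {𝒢 : Finset (Finset α)} {p : ℕ}
    (hp : 1 ≤ p) (hn : 2 ^ (3 * p + 2) * p ^ 2 + p < #U) (hU : ∀ K ∈ 𝒢, K ⊆ U)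
    (h𝒢 : ∀ G ∈ 𝒢, ∀ H ∈ 𝒢, ∀ K ∈ 𝒢, unionSum G H K ≤ 6 * p + 4) :
    #𝒢 ≤ ∑ i ∈ range (p + 1), (#U).choose i + (#U - 1).choose p := by
  rw [← card_filter_add_card_filter_not (fun K => #K < p + 1)]
  gcongr
  · exact card_le_sum_choose_of_card_lt (fun K hK => hU K (mem_filter.1 hK).1)
      fun K hK => (mem_filter.1 hK).2
  · refine card_le_choose_of_forall_lt_card hp hn (fun K hK => hU K (mem_filter.1 hK).1)
      (fun K hK => by have := (mem_filter.1 hK).2; omega) fun G hG H hH K hK => ?_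
    exact h𝒢 G (mem_filter.1 hG).1 H (mem_filter.1 hH).1 K (mem_filter.1 hK).1

theorem card_union_le_of_card_erase_le {a : α} {p : ℕ} {G H : Finset α}
    (hG : #(G.erase a) ≤ p) (hH : #(H.erase a) ≤ p) : #(G ∪ H) ≤ 2 * p + 1 := by
  calc #(G ∪ H) ≤ #(insert a (G.erase a ∪ H.erase a)) :=
        card_le_card fun x => by simp only [mem_union, mem_insert, mem_erase]; tauto
    _ ≤ #(G.erase a ∪ H.erase a) + 1 := card_insert_le _ _
    _ ≤ 2 * p + 1 := by have := card_union_le (G.erase a) (H.erase a); omega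

-- `#(K.erase a) ≤ p` singles out the sets of size at most `p` and the `(p+1)`-sets containing `a`.
theorem card_filter_card_erase_le {U : Finset α} {a : α} (ha : a ∈ U) (p : ℕ) :
    #{K ∈ U.powerset | #(K.erase a) ≤ p} =
      ∑ i ∈ range (p + 1), (#U).choose i + (#U - 1).choose p := by
  have hcontain := card_filter_powersetCard_subset {a} U (p + 1) (by simpa) (by simp)
  rw [card_singleton, Nat.add_sub_cancel] at hcontain
  rw [← card_filter_add_card_filter_not (fun K => #K < p + 1), filter_filter, filter_filter,
    ← card_filter_powerset_card_lt, ← hcontain, powersetCard_eq_filter, filter_filter]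
  congr 2
  · exact filter_congr fun K _ => by rw [card_erase_eq_ite]; split_ifs <;> omega
  · exact filter_congr fun K _ => by
      rw [card_erase_eq_ite, singleton_subset_iff]; split_ifs <;> simp_all; omega

theorem le_dd_sdiff_iff {U A B C : Finset ℕ} (hA : A ⊆ U) (hB : B ⊆ U) (hC : C ⊆ U) (t : ℕ) :
    3 * #U - t ≤ dd (U \ A) (U \ B) (U \ C) ↔ unionSum A B C ≤ t := by
  have hcompl : ∀ {X Y : Finset ℕ}, X ⊆ U → Y ⊆ U → #((U \ X) ∩ (U \ Y)) + #(X ∪ Y) = #U :=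
    fun hX hY => by
      rw [← sdiff_union_distrib]
      exact card_sdiff_add_card_eq_card (union_subset hX hY)
  have := hcompl hA hB
  have := hcompl hB hC
  have := hcompl hC hA
  simp only [dd, unionSum]
  omega

theorem card_le_of_le_dd {U : Finset ℕ} {𝓕 : Finset (Finset ℕ)} {p : ℕ} (hp : 1 ≤ p)
    (hn : 2 ^ (3 * p + 2) * p ^ 2 + p < #U) (hU : ∀ F ∈ 𝓕, F ⊆ U)
    (h𝓕 : ∀ A ∈ 𝓕, ∀ B ∈ 𝓕, ∀ C ∈ 𝓕, 3 * #U - (6 * p + 4) ≤ dd A B C) :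
    #𝓕 ≤ ∑ i ∈ range (p + 1), (#U).choose i + (#U - 1).choose p := by
  rw [← card_image_sdiff hU]
  refine card_le_of_unionSum_le hp hn (by simp) ?_
  simp only [forall_mem_image]
  intro A hA B hB C hC
  rw [← le_dd_sdiff_iff sdiff_subset sdiff_subset sdiff_subset,
    Finset.sdiff_sdiff_eq_self (hU A hA), Finset.sdiff_sdiff_eq_self (hU B hB),
    Finset.sdiff_sdiff_eq_self (hU C hC)]
  exact h𝓕 A hA B hB C hC

theorem exists_le_dd_card_eq {U : Finset ℕ} {a : ℕ} (ha : a ∈ U) (p : ℕ) :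
    ∃ 𝓕 : Finset (Finset ℕ), (∀ F ∈ 𝓕, F ⊆ U) ∧
      (∀ A ∈ 𝓕, ∀ B ∈ 𝓕, ∀ C ∈ 𝓕, 3 * #U - (6 * p + 4) ≤ dd A B C) ∧
      #𝓕 = ∑ i ∈ range (p + 1), (#U).choose i + (#U - 1).choose p := by
  set 𝒢 := {K ∈ U.powerset | #(K.erase a) ≤ p}
  have h𝒢 : ∀ K ∈ 𝒢, K ⊆ U ∧ #(K.erase a) ≤ p := by simp [𝒢]
  refine ⟨𝒢.image (U \ ·), by simp, ?_, ?_⟩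
  · simp only [forall_mem_image]
    intro G hG H hH K hK
    rw [le_dd_sdiff_iff (h𝒢 G hG).1 (h𝒢 H hH).1 (h𝒢 K hK).1]
    have := card_union_le_of_card_erase_le (h𝒢 G hG).2 (h𝒢 H hH).2
    have := card_union_le_of_card_erase_le (h𝒢 H hH).2 (h𝒢 K hK).2
    have := card_union_le_of_card_erase_le (h𝒢 K hK).2 (h𝒢 G hG).2
    simp only [unionSum]
    omega
  · rw [card_image_sdiff fun K hK => (h𝒢 K hK).1, card_filter_card_erase_le ha]

theorem stmt18 (n p : ℕ) (hp : 1 ≤ p) (hn : 2 ^ (3 * p + 2) * p ^ 2 + p + 1 ≤ n) :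
    IsGreatest {m : ℕ | ∃ 𝓕 : Finset (Finset ℕ), (∀ F ∈ 𝓕, F ⊆ Finset.Icc 1 n) ∧
        (∀ A ∈ 𝓕, ∀ B ∈ 𝓕, ∀ C ∈ 𝓕, 3 * n - (6 * p + 4) ≤ dd A B C) ∧ 𝓕.card = m}
      ((∑ i ∈ Finset.range (p + 1), n.choose i) + (n - 1).choose p) := by
  have hU : #(Icc 1 n) = n := by simp
  refine ⟨?_, ?_⟩
  · have h1 : 1 ∈ Icc 1 n := mem_Icc.2 ⟨le_rfl, by omega⟩
    simpa only [hU, Set.mem_ofPred_eq] using exists_le_dd_card_eq h1 p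
  · rintro m ⟨𝓕, hsub, h𝓕, rfl⟩
    rw [← hU] at hn h𝓕 ⊢
    exact card_le_of_le_dd hp hn hsub h𝓕
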